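/- arXiv:1803.07643 — 8 statements merged into one kernel-verified Lean document; each statement's English description precedes it below -/
import Mathlib

section
/- Blocking lemma: suppose the market potential function p is monotonically nondecreasing, and there exists R' with p(R') ≤ R'. Then every trajectory (R_k) with R_0 ≤ R' satisfies R_k ≤ R' for all k; in particular, for any critical level R♯ ≥ R', such a trajectory is never a death spiral. -/
/-- Blocking lemma: a point R' with p(R') ≤ R' blocks every trajectory starting below it;
in particular such a trajectory is never a death spiral for any critical level R♯ ≥ R'. -/
theorem blocking_lemma
    (p g : ℝ → ℝ)
    (H1 : ∀ R : ℝ, p R ≤ R → g R = R)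
    (H2 : ∀ R : ℝ, R < p R → R < g R ∧ g R < p R)
    (hp : Monotone p)
    (R' : ℝ) (hR' : p R' ≤ R')
    (R : ℕ → ℝ) (hR : ∀ k : ℕ, R (k + 1) = g (R k))
    (h0 : R 0 ≤ R') :
    (∀ k : ℕ, R k ≤ R') ∧
      ∀ Rsharp : ℝ, R' ≤ Rsharp → ¬ (∃ k : ℕ, Rsharp < R k) := by
  have hbound : ∀ k : ℕ, R k ≤ R' := by
    intro k
    induction k with
    | zero => exact h0
    | succ n ih =>
      rw [hR n]
      by_cases h : p (R n) ≤ R n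
      · rw [H1 _ h]; exact ih
      · push_neg at h
        have h2 := (H2 _ h).2
        have : p (R n) ≤ p R' := hp ih
        linarith
  refine ⟨hbound, fun Rsharp hs ⟨k, hk⟩ => ?_⟩
  have := hbound k
  linarith
end

section
/- Existence condition for death spiral (sufficiency): let R♯ ∈ ℝ be the critical adoption level and suppose g is continuous on the interval [R♯ − ε, R♯] for some ε > 0. If a trajectory (R_k) satisfies R_{k₀} ∈ [R♯ − ε, R♯] for some k₀ ≥ 0, and p(R) > R for all R ∈ [R♯ − ε, R♯], then the trajectory is a death spiral: there exists k with R_k > R♯. -/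
/-- Existence condition for death spiral (sufficiency). -/
theorem death_spiral_sufficient
    (p g : ℝ → ℝ)
    (H1 : ∀ R : ℝ, p R ≤ R → g R = R)
    (H2 : ∀ R : ℝ, R < p R → R < g R ∧ g R < p R)
    (Rsharp ε : ℝ) (hε : 0 < ε)
    (hg : ContinuousOn g (Set.Icc (Rsharp - ε) Rsharp))
    (R : ℕ → ℝ) (hR : ∀ k : ℕ, R (k + 1) = g (R k))
    (k₀ : ℕ) (hk₀ : R k₀ ∈ Set.Icc (Rsharp - ε) Rsharp)
    (hp : ∀ x ∈ Set.Icc (Rsharp - ε) Rsharp, x < p x) :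
    ∃ k : ℕ, Rsharp < R k := by
  by_contra hcon
  push_neg at hcon
  set a := Rsharp - ε with ha
  set S : ℕ → ℝ := fun n => R (k₀ + n) with hS
  have hstep : ∀ n, S (n + 1) = g (S n) := by
    intro n
    simp only [hS, Nat.add_succ]
    exact hR (k₀ + n)
  have hmem : ∀ n, S n ∈ Set.Icc a Rsharp := by
    intro n
    induction n with
    | zero => simpa [hS] using hk₀
    | succ n ih =>
      have hlt := (H2 _ (hp _ ih)).1
      rw [hstep]
      exact ⟨le_trans ih.1 hlt.le, by rw [← hstep]; exact hcon _⟩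
  have hmono : Monotone S := monotone_nat_of_le_succ (fun n => by
    rw [hstep]; exact (H2 _ (hp _ (hmem n))).1.le)
  have hbdd : BddAbove (Set.range S) := by
    refine ⟨Rsharp, ?_⟩
    rintro x ⟨n, rfl⟩
    exact (hmem n).2
  have hL := tendsto_atTop_ciSup hmono hbdd
  set L := ⨆ n, S n with hLdef
  have hLmem : L ∈ Set.Icc a Rsharp := by
    constructor
    · exact le_trans (hmem 0).1 (le_ciSup hbdd 0)
    · exact ciSup_le fun n => (hmem n).2
  have hcont := hg.continuousWithinAt hLmem
  have h1 : Filter.Tendsto S Filter.atTop (nhdsWithin L (Set.Icc a Rsharp)) :=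
    tendsto_nhdsWithin_of_tendsto_nhds_of_eventually_within _ hL
      (Filter.Eventually.of_forall hmem)
  have h2 : Filter.Tendsto (fun n => g (S n)) Filter.atTop (nhds (g L)) :=
    (hcont.tendsto).comp h1
  have h3 : Filter.Tendsto (fun n => S (n + 1)) Filter.atTop (nhds L) :=
    hL.comp (Filter.tendsto_add_atTop_nat 1)
  have hgL : g L = L := by
    refine tendsto_nhds_unique ?_ h3
    simpa only [hstep] using h2
  exact absurd (H2 L (hp L hLmem)).1 (by rw [hgL]; exact lt_irrefl L)
end

section
/- In the course of a death spiral the market potential exceeds the adoption level along the whole range traversed: suppose p is monotonically nondecreasing, R♯ ∈ ℝ, and the trajectory (R_k) with R_0 ≤ R♯ satisfies R_k > R♯ for some k. Then p(R) > R for every R ∈ [R_0, R♯]. -/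
/-- In the course of a death spiral, the market potential exceeds the adoption level
along the whole range traversed. -/
theorem death_spiral_potential_exceeds
    (p g : ℝ → ℝ)
    (H1 : ∀ R : ℝ, p R ≤ R → g R = R)
    (H2 : ∀ R : ℝ, R < p R → R < g R ∧ g R < p R)
    (hp : Monotone p)
    (Rsharp : ℝ)
    (R : ℕ → ℝ) (hR : ∀ k : ℕ, R (k + 1) = g (R k))
    (h0 : R 0 ≤ Rsharp)
    (hd : ∃ k : ℕ, Rsharp < R k) :
    ∀ x ∈ Set.Icc (R 0) Rsharp, x < p x := by
  rintro x ⟨hx0, hxs⟩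
  by_contra hpx
  push_neg at hpx
  have hall : ∀ k, R k ≤ x := by
    intro k
    induction k with
    | zero => exact hx0
    | succ n ih =>
      rw [hR n]
      rcases le_or_gt (p (R n)) (R n) with h | h
      · rw [H1 _ h]; exact ih
      · exact le_of_lt (lt_of_lt_of_le (H2 _ h).2 (le_trans (hp ih) hpx))
  obtain ⟨k, hk⟩ := hd
  exact absurd (hall k) (not_le.mpr (lt_of_le_of_lt hxs hk))
end

section
/- Lyapunov stability of an equilibrium: let R* ∈ ℝ satisfy p(R*) ≤ R*, suppose p is continuous at R*, and suppose there exists ε₀ > 0 such that p(R) ≤ R for all R ∈ (R*, R* + ε₀). Then R* is a Lyapunov stable equilibrium of the adoption dynamics: g(R*) = R*, and for every ε > 0 there exists δ > 0 such that every trajectory (R_k) with |R_0 − R*| < δ satisfies |R_k − R*| < ε for all k ≥ 0. -/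
/-- Lyapunov stability of an equilibrium R* with p(R*) ≤ R*, p continuous at R*,
and p(R) ≤ R on a right neighborhood of R*. -/
theorem lyapunov_stable_equilibrium
    (p g : ℝ → ℝ)
    (H1 : ∀ R : ℝ, p R ≤ R → g R = R)
    (H2 : ∀ R : ℝ, R < p R → R < g R ∧ g R < p R)
    (Rstar : ℝ) (hps : p Rstar ≤ Rstar)
    (hpc : ContinuousAt p Rstar)
    (ε₀ : ℝ) (hε₀ : 0 < ε₀)
    (hright : ∀ x ∈ Set.Ioo Rstar (Rstar + ε₀), p x ≤ x) :
    g Rstar = Rstar ∧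
      ∀ ε > 0, ∃ δ > 0, ∀ R : ℕ → ℝ, (∀ k : ℕ, R (k + 1) = g (R k)) →
        |R 0 - Rstar| < δ → ∀ k : ℕ, |R k - Rstar| < ε := by
  have hg0 : g Rstar = Rstar := H1 _ hps
  refine ⟨hg0, ?_⟩
  intro ε hε
  set ε' := min ε ε₀ with hε'def
  have hε'pos : 0 < ε' := lt_min hε hε₀
  obtain ⟨δ₁, hδ₁pos, hδ₁⟩ := Metric.continuousAt_iff.mp hpc ε' hε'pos
  refine ⟨min δ₁ ε', lt_min hδ₁pos hε'pos, ?_⟩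
  intro R hR h0 k
  set δ := min δ₁ ε' with hδdef
  have hδε : δ ≤ ε' := min_le_right _ _
  have hδδ₁ : δ ≤ δ₁ := min_le_left _ _
  have hε'ε : ε' ≤ ε := min_le_left _ _
  have hε'ε₀ : ε' ≤ ε₀ := min_le_right _ _
  have key : ∀ k, Rstar - δ < R k ∧ R k < Rstar + ε' := by
    intro k
    induction k with
    | zero =>
      rw [abs_sub_lt_iff] at h0
      exact ⟨by linarith [h0.2], by linarith [h0.1]⟩
    | succ n ih =>
      obtain ⟨hl, hr⟩ := ih
      rw [hR n]
      by_cases hc : p (R n) ≤ R n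
      · rw [H1 _ hc]; exact ⟨hl, hr⟩
      · push_neg at hc
        obtain ⟨h1, h2⟩ := H2 _ hc
        have hlt : R n < Rstar := by
          by_contra h
          push_neg at h
          rcases eq_or_lt_of_le h with h | h
          · rw [← h] at hc; linarith
          · have := hright (R n) ⟨h, by linarith⟩
            linarith
        have hd : dist (R n) Rstar < δ₁ := by
          rw [Real.dist_eq, abs_sub_lt_iff]
          constructor <;> linarith
        have hcont := hδ₁ hd
        rw [Real.dist_eq, abs_sub_lt_iff] at hcont
        exact ⟨by linarith, by linarith [hcont.1]⟩
  have hk := key k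
  rw [abs_sub_lt_iff]
  exact ⟨by linarith [hk.2], by linarith [hk.1]⟩
end

section
/- Stable adoption converging to an equilibrium: let R* ∈ ℝ and ε > 0 be such that R < p(R) ≤ R* for all R ∈ (R* − ε, R*), suppose g is continuous on [R* − ε, R*], and let (R_k) be a trajectory with R_{k₀} ∈ (R* − ε, R*) for some k₀ ≥ 0. Then the trajectory converges to R*: lim_{k→∞} R_k = R*. -/
/-- Stable adoption converging to an equilibrium R*. -/
theorem stable_adoption_converges
    (p g : ℝ → ℝ)
    (H1 : ∀ R : ℝ, p R ≤ R → g R = R)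
    (H2 : ∀ R : ℝ, R < p R → R < g R ∧ g R < p R)
    (Rstar ε : ℝ) (hε : 0 < ε)
    (hcond : ∀ x ∈ Set.Ioo (Rstar - ε) Rstar, x < p x ∧ p x ≤ Rstar)
    (hg : ContinuousOn g (Set.Icc (Rstar - ε) Rstar))
    (R : ℕ → ℝ) (hR : ∀ k : ℕ, R (k + 1) = g (R k))
    (k₀ : ℕ) (hk₀ : R k₀ ∈ Set.Ioo (Rstar - ε) Rstar) :
    Filter.Tendsto R Filter.atTop (nhds Rstar) := by
  set S : ℕ → ℝ := fun k => R (k + k₀) with hS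
  have hmem : ∀ k, S k ∈ Set.Ioo (Rstar - ε) Rstar := by
    intro k
    induction k with
    | zero => simpa [hS] using hk₀
    | succ n ih =>
      obtain ⟨h1, h2⟩ := ih
      obtain ⟨hp1, hp2⟩ := hcond (S n) ⟨h1, h2⟩
      obtain ⟨hg1, hg2⟩ := H2 (S n) hp1
      have hrec : S (n + 1) = g (S n) := by
        simp only [hS]
        rw [show n + 1 + k₀ = (n + k₀) + 1 by ring, hR]
      constructor
      · rw [hrec]; exact h1.trans hg1
      · rw [hrec]; exact lt_of_lt_of_le hg2 hp2
  have hmono : Monotone S := by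
    apply monotone_nat_of_le_succ
    intro n
    obtain ⟨h1, h2⟩ := hmem n
    obtain ⟨hp1, _⟩ := hcond (S n) ⟨h1, h2⟩
    obtain ⟨hg1, _⟩ := H2 (S n) hp1
    have hrec : S (n + 1) = g (S n) := by
      simp only [hS]
      rw [show n + 1 + k₀ = (n + k₀) + 1 by ring, hR]
    rw [hrec]; exact hg1.le
  have hbdd : BddAbove (Set.range S) := by
    refine ⟨Rstar, ?_⟩
    rintro x ⟨k, rfl⟩
    exact (hmem k).2.le
  set L : ℝ := ⨆ k, S k with hL
  have hSL : Filter.Tendsto S Filter.atTop (nhds L) := tendsto_atTop_ciSup hmono hbdd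
  have hLle : L ≤ Rstar := ciSup_le fun k => (hmem k).2.le
  have hLgt : Rstar - ε < L := lt_of_lt_of_le (hmem 0).1 (le_ciSup hbdd 0)
  have hLmem : L ∈ Set.Icc (Rstar - ε) Rstar := ⟨hLgt.le, hLle⟩
  -- g L = L
  have hSLw : Filter.Tendsto S Filter.atTop (nhdsWithin L (Set.Icc (Rstar - ε) Rstar)) := by
    apply tendsto_nhdsWithin_of_tendsto_nhds_of_eventually_within _ hSL
    exact Filter.Eventually.of_forall fun k => ⟨(hmem k).1.le, (hmem k).2.le⟩
  have hgS : Filter.Tendsto (fun k => g (S k)) Filter.atTop (nhds (g L)) :=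
    (hg L hLmem).tendsto.comp hSLw
  have hshift : Filter.Tendsto (fun k => S (k + 1)) Filter.atTop (nhds L) :=
    hSL.comp (Filter.tendsto_add_atTop_nat 1)
  have hgSeq : (fun k => S (k + 1)) = fun k => g (S k) := by
    funext n
    simp only [hS]
    rw [show n + 1 + k₀ = (n + k₀) + 1 by ring, hR]
  have hfix : g L = L := by
    rw [hgSeq] at hshift
    exact tendsto_nhds_unique hgS hshift
  have hLeq : L = Rstar := by
    by_contra h
    have hlt : L < Rstar := lt_of_le_of_ne hLle h
    obtain ⟨hp1, _⟩ := hcond L ⟨hLgt, hlt⟩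
    obtain ⟨hg1, _⟩ := H2 L hp1
    rw [hfix] at hg1
    exact lt_irrefl L hg1
  rw [← hLeq]
  exact (Filter.tendsto_add_atTop_iff_nat k₀).mp hSL
end

section
/- Death spiral threshold in retailer cost: for each retailer cost θ, let p(·, θ) : ℝ → ℝ be the market potential function, g_θ : ℝ → ℝ the update map satisfying (H1) and (H2) with respect to p(·, θ), and R♯(θ) the critical adoption level. Assume (i) for each fixed R, the map θ ↦ p(R, θ) is monotonically nondecreasing; (ii) θ ↦ R♯(θ) is monotonically nonincreasing with R♯(θ) ≥ 0 for all θ; (iii) for each θ, g_θ is continuous on [0, R♯(θ)]. If there exists θ₁ such that p(R, θ₁) > R for all R ∈ [0, R♯(θ₁)], then for every θ ≥ θ₁ and every trajectory (R_k) of g_θ with R_0 ∈ [0, R♯(θ)], there exists k with R_k > R♯(θ); i.e., every retailer cost θ ≥ θ₁ induces a death spiral. -/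
/-- Death spiral threshold in retailer cost: if at cost θ₁ the market potential strictly
exceeds the adoption level up to the critical level, then every cost θ ≥ θ₁ induces a
death spiral. -/
theorem death_spiral_cost_threshold
    (p : ℝ → ℝ → ℝ) (g : ℝ → ℝ → ℝ)
    (H1 : ∀ θ R : ℝ, p R θ ≤ R → g θ R = R)
    (H2 : ∀ θ R : ℝ, R < p R θ → R < g θ R ∧ g θ R < p R θ)
    (Rsharp : ℝ → ℝ)
    (hi : ∀ R : ℝ, Monotone (fun θ => p R θ))
    (hii : Antitone Rsharp) (hii' : ∀ θ : ℝ, 0 ≤ Rsharp θ)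
    (hiii : ∀ θ : ℝ, ContinuousOn (g θ) (Set.Icc 0 (Rsharp θ)))
    (θ₁ : ℝ) (hθ₁ : ∀ R ∈ Set.Icc 0 (Rsharp θ₁), R < p R θ₁) :
    ∀ θ : ℝ, θ₁ ≤ θ →
      ∀ R : ℕ → ℝ, (∀ k : ℕ, R (k + 1) = g θ (R k)) →
        R 0 ∈ Set.Icc 0 (Rsharp θ) → ∃ k : ℕ, Rsharp θ < R k := by
  intro θ hθ R hR hR0
  by_contra h
  push_neg at h
  -- every point of [0, Rsharp θ] has g θ x > x
  have hsub : Set.Icc 0 (Rsharp θ) ⊆ Set.Icc 0 (Rsharp θ₁) := by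
    apply Set.Icc_subset_Icc le_rfl (hii hθ)
  have hgt : ∀ x ∈ Set.Icc 0 (Rsharp θ), x < g θ x := by
    intro x hx
    have h1 : x < p x θ₁ := hθ₁ x (hsub hx)
    have h2 : p x θ₁ ≤ p x θ := hi x hθ
    exact (H2 θ x (lt_of_lt_of_le h1 h2)).1
  -- all iterates stay in the interval
  have hmem : ∀ k, R k ∈ Set.Icc 0 (Rsharp θ) := by
    intro k
    induction k with
    | zero => exact hR0
    | succ n ih =>
      refine ⟨?_, h (n+1)⟩
      rw [hR n]
      exact le_of_lt (lt_of_le_of_lt ih.1 (hgt _ ih))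
  -- positive minimum of the gap on the compact interval
  have hne : (Set.Icc 0 (Rsharp θ)).Nonempty := ⟨0, le_refl 0, hii' θ⟩
  have hcont : ContinuousOn (fun x => g θ x - x) (Set.Icc 0 (Rsharp θ)) :=
    (hiii θ).sub continuousOn_id
  obtain ⟨c, hc, hcmin⟩ := (isCompact_Icc).exists_isMinOn hne hcont
  set δ := g θ c - c with hδ
  have hδ0 : 0 < δ := sub_pos.mpr (hgt c hc)
  have hstep : ∀ k, R 0 + k * δ ≤ R k := by
    intro k
    induction k with
    | zero => simp
    | succ n ih =>
      have hmin : δ ≤ g θ (R n) - R n := hcmin (hmem n)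
      have : R 0 + (n+1) * δ ≤ R n + δ := by push_cast; linarith
      calc R 0 + (↑(n+1)) * δ ≤ R n + δ := by push_cast; linarith
        _ ≤ g θ (R n) := by linarith
        _ = R (n+1) := (hR n).symm
  obtain ⟨n, hn⟩ := Archimedean.arch (Rsharp θ - R 0 + 1) hδ0
  have : Rsharp θ < R n := by
    have := hstep n
    have hns : (n : ℝ) * δ = n • δ := by simp
    have h2 : Rsharp θ - R 0 + 1 ≤ (n:ℝ) * δ := by
      rw [hns]; simpa using hn
    linarith
  exact absurd this (not_lt.mpr (h n))
end

section
/- Limiting adoption capacity upper bound: for each retailer cost θ ≥ 0, let p(·, θ) be the market potential function, g_θ the update map satisfying (H1) and (H2) with respect to p(·, θ), and R♯(θ) ≥ 0 the critical adoption level. Assume (i) θ ↦ p(R♯(θ), θ) is monotonically nondecreasing; (ii) p(R♯(θ), θ) ≥ p(R, θ) for all 0 ≤ R ≤ R♯(θ) and all θ ≥ 0; (iii) θ ↦ R♯(θ) is monotonically nonincreasing; and (iv) there exists θ° ≥ 0 with p(R♯(θ°), θ°) = R♯(θ°). Then: (a) for every θ ≥ 0 and every trajectory (R_k) of g_θ with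 R_0 ∈ [0, R♯(θ°)] that is not a death spiral (R_k ≤ R♯(θ) for all k), one has R_k ≤ R♯(θ°) for all k; and (b) R♯(θ°) is an equilibrium of the dynamics at cost θ°, i.e., g_{θ°}(R♯(θ°)) = R♯(θ°). Hence the limiting adoption capacity achievable without a death spiral equals R♯(θ°). -/
/-- Limiting adoption capacity for two-part tariffs: under the stated assumptions, no
trajectory avoiding a death spiral ever exceeds R♯(θ°), and R♯(θ°) is an equilibrium at
cost θ°; hence the limiting adoption capacity equals R♯(θ°). -/
theorem limiting_capacity
    (p : ℝ → ℝ → ℝ) (g : ℝ → ℝ → ℝ)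
    (H1 : ∀ θ R : ℝ, 0 ≤ θ → p R θ ≤ R → g θ R = R)
    (H2 : ∀ θ R : ℝ, 0 ≤ θ → R < p R θ → R < g θ R ∧ g θ R < p R θ)
    (Rsharp : ℝ → ℝ) (hRsharpNonneg : ∀ θ : ℝ, 0 ≤ θ → 0 ≤ Rsharp θ)
    (hi : ∀ θ₁ θ₂ : ℝ, 0 ≤ θ₁ → θ₁ ≤ θ₂ → p (Rsharp θ₁) θ₁ ≤ p (Rsharp θ₂) θ₂)
    (hii : ∀ θ : ℝ, 0 ≤ θ → ∀ R ∈ Set.Icc 0 (Rsharp θ), p R θ ≤ p (Rsharp θ) θ)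
    (hiii : ∀ θ₁ θ₂ : ℝ, 0 ≤ θ₁ → θ₁ ≤ θ₂ → Rsharp θ₂ ≤ Rsharp θ₁)
    (θc : ℝ) (hθc : 0 ≤ θc) (hfix : p (Rsharp θc) θc = Rsharp θc) :
    (∀ θ : ℝ, 0 ≤ θ →
       ∀ R : ℕ → ℝ, (∀ k : ℕ, R (k + 1) = g θ (R k)) →
         R 0 ∈ Set.Icc 0 (Rsharp θc) → (∀ k : ℕ, R k ≤ Rsharp θ) →
           ∀ k : ℕ, R k ≤ Rsharp θc) ∧
    g θc (Rsharp θc) = Rsharp θc := by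
  constructor
  · intro θ hθ R hR hR0 hnds
    rcases le_total θ θc with hle | hge
    · have key : ∀ k : ℕ, 0 ≤ R k ∧ R k ≤ Rsharp θc := by
        intro k
        induction k with
        | zero => exact ⟨hR0.1, hR0.2⟩
        | succ k ih =>
          rcases le_or_gt (p (R k) θ) (R k) with h | h
          · rw [hR k, H1 θ (R k) hθ h]; exact ih
          · obtain ⟨h1, h2⟩ := H2 θ (R k) hθ h
            rw [hR k]
            constructor
            · exact le_of_lt (lt_of_le_of_lt ih.1 h1)
            · have hmem : R k ∈ Set.Icc 0 (Rsharp θ) := ⟨ih.1, hnds k⟩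
              have := hii θ hθ (R k) hmem
              have := hi θ θc hθ hle
              linarith [hfix ▸ this]
      exact fun k => (key k).2
    · intro k
      exact le_trans (hnds k) (hiii θc θ hθc hge)
  · exact H1 θc (Rsharp θc) hθc (le_of_eq hfix)
end

section
/- Dichotomy of adoption outcomes under monotone market potential: suppose p is monotonically nondecreasing and continuous on [R_0, R♯], g is continuous on [R_0, R♯], and R_0 ≤ R♯. Then for every trajectory (R_k) starting at R_0, exactly one of the following holds: (a) there exists k with R_k > R♯ (death spiral), or (b) the trajectory converges to some equilibrium L ∈ [R_0, R♯] with p(L) ≤ L. -/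
/-- Dichotomy of adoption outcomes under monotone market potential: either a death
spiral occurs, or the trajectory converges to some equilibrium in [R₀, R♯]. -/
theorem adoption_dichotomy
    (p g : ℝ → ℝ)
    (H1 : ∀ R : ℝ, p R ≤ R → g R = R)
    (H2 : ∀ R : ℝ, R < p R → R < g R ∧ g R < p R)
    (R₀ Rsharp : ℝ) (h0sharp : R₀ ≤ Rsharp)
    (hpmono : MonotoneOn p (Set.Icc R₀ Rsharp))
    (hpc : ContinuousOn p (Set.Icc R₀ Rsharp))
    (hgc : ContinuousOn g (Set.Icc R₀ Rsharp))
    (R : ℕ → ℝ) (hR : ∀ k : ℕ, R (k + 1) = g (R k))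
    (hstart : R 0 = R₀) :
    Xor' (∃ k : ℕ, Rsharp < R k)
      (∃ L ∈ Set.Icc R₀ Rsharp, g L = L ∧ p L ≤ L ∧
        Filter.Tendsto R Filter.atTop (nhds L)) := by
  have hstep : ∀ x : ℝ, x ≤ g x := by
    intro x
    rcases le_or_gt (p x) x with h | h
    · rw [H1 x h]
    · exact (H2 x h).1.le
  have hmono : Monotone R := by
    apply monotone_nat_of_le_succ
    intro n
    rw [hR n]; exact hstep (R n)
  by_cases hds : ∃ k : ℕ, Rsharp < R k
  · refine Or.inl ⟨hds, ?_⟩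
    rintro ⟨L, hL, -, -, hlim⟩
    obtain ⟨k, hk⟩ := hds
    have : R k ≤ L := hmono.ge_of_tendsto hlim k
    linarith [hL.2]
  · -- all terms in [R₀, Rsharp]
    push_neg at hds
    have hmem : ∀ k, R k ∈ Set.Icc R₀ Rsharp := by
      intro k
      refine ⟨?_, hds k⟩
      calc R₀ = R 0 := hstart.symm
        _ ≤ R k := hmono (Nat.zero_le k)
    have hbdd : BddAbove (Set.range R) := ⟨Rsharp, by rintro x ⟨k, rfl⟩; exact hds k⟩
    set L := ⨆ k, R k with hLdef
    have hlim : Filter.Tendsto R Filter.atTop (nhds L) := tendsto_atTop_ciSup hmono hbdd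
    have hLmem : L ∈ Set.Icc R₀ Rsharp := by
      constructor
      · calc R₀ = R 0 := hstart.symm
          _ ≤ L := le_ciSup hbdd 0
      · exact ciSup_le fun k => hds k
    have hgL : g L = L := by
      have hlim' : Filter.Tendsto R Filter.atTop (nhdsWithin L (Set.Icc R₀ Rsharp)) := by
        rw [tendsto_nhdsWithin_iff]
        exact ⟨hlim, Filter.Eventually.of_forall hmem⟩
      have h1 : Filter.Tendsto (fun k => g (R k)) Filter.atTop (nhds (g L)) :=
        (hgc L hLmem).tendsto.comp hlim'
      have h2 : Filter.Tendsto (fun k => g (R k)) Filter.atTop (nhds L) := by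
        have := hlim.comp (Filter.tendsto_add_atTop_nat 1)
        simpa only [Function.comp_def, hR] using this
      exact tendsto_nhds_unique h1 h2
    have hpL : p L ≤ L := by
      by_contra h
      push_neg at h
      have := (H2 L h).1
      rw [hgL] at this
      exact lt_irrefl L this
    exact Or.inr ⟨⟨L, hLmem, hgL, hpL, hlim⟩, fun ⟨k, hk⟩ => absurd hk (not_lt.mpr (hds k))⟩
end
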